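/- Let p be an integer not divisible by 3. Then for every integer j, Σ_{ν=0}^{8} ζ_9^{jν − 4pν³} = 0 if and only if j is not divisible by 3. Equivalently, 𝔓(p/9) = { j ∈ [0,17] ∩ ℤ : j ≢ 0 mod 3 }. -/
import Mathlib

open Polynomial

/-- ζ_m = exp(2πi/m), the primitive m-th root of unity. -/
noncomputable def zeta (m : ℕ) : ℂ := Complex.exp (2 * Real.pi * Complex.I / (m : ℂ))


lemma zeta9_prim : IsPrimitiveRoot (zeta 9) 9 := by
  have := Complex.isPrimitiveRoot_exp 9 (by norm_num)
  simpa [zeta] using this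

lemma cyc9 : cyclotomic 9 ℚ = X^6 + X^3 + 1 := by
  have : (9:ℕ) = 3 ^ (1+1) := by norm_num
  rw [this, cyclotomic_prime_pow_eq_geom_sum (by norm_num)]
  simp [Finset.sum_range_succ]
  ring

lemma B_ne (r s : ℕ) (hr9 : r < 9) (hs9 : s < 9) (hr3 : ¬ 3 ∣ r) (hs3 : ¬ 3 ∣ s) :
    (1 : ℂ) + zeta 9 ^ r + zeta 9 ^ s ≠ 0 := by
  intro h
  have hζ := zeta9_prim
  set f : Polynomial ℚ := 1 + X^r + X^s with hf
  have hf0 : (aeval (zeta 9)) f = 0 := by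
    simp only [hf, map_add, map_one, map_pow, aeval_X]
    linear_combination h
  have hmin : minpoly ℚ (zeta 9) = cyclotomic 9 ℚ := (cyclotomic_eq_minpoly_rat hζ (by norm_num)).symm
  have hdvd : cyclotomic 9 ℚ ∣ f := hmin ▸ minpoly.dvd ℚ (zeta 9) hf0
  obtain ⟨g, hg⟩ := hdvd
  rw [cyc9] at hg
  -- f.coeff 0 = 1, f.coeff 3 = 0
  have hr0 : r ≠ 0 := fun h0 => hr3 (h0 ▸ dvd_zero 3)
  have hs0 : s ≠ 0 := fun h0 => hs3 (h0 ▸ dvd_zero 3)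
  have hrne3 : r ≠ 3 := fun h0 => hr3 (by rw [h0])
  have hsne3 : s ≠ 3 := fun h0 => hs3 (by rw [h0])
  have hc0 : f.coeff 0 = 1 := by
    simp [hf, coeff_X_pow, hr0.symm, hs0.symm, Ne.symm hr0, Ne.symm hs0]
  have hc3 : f.coeff 3 = 0 := by
    simp [hf, coeff_X_pow, coeff_one, Ne.symm hrne3, Ne.symm hsne3]
  -- g ≠ 0
  have hgne : g ≠ 0 := by
    intro h0
    rw [h0, mul_zero] at hg
    rw [hg] at hc0; simp at hc0
  have hfne : f ≠ 0 := by intro h0; rw [h0] at hc0; simp at hc0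
  -- degrees
  have hdegf : f.natDegree ≤ 8 := by
    apply natDegree_add_le_of_degree_le
    apply natDegree_add_le_of_degree_le
    · simp
    · rw [natDegree_X_pow]; omega
    · rw [natDegree_X_pow]; omega
  have hdeg6 : ((X:ℚ[X])^6 + X^3 + 1).natDegree = 6 := by
    compute_degree!
  have hdegg : g.natDegree ≤ 2 := by
    have := natDegree_mul (p := (X:ℚ[X])^6 + X^3 + 1) (q := g) (fun h0 => by simp [h0] at hdeg6) hgne
    rw [← hg, hdeg6] at this
    omega
  have hg3 : g.coeff 3 = 0 := coeff_eq_zero_of_natDegree_lt (by omega)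
  -- compute coeffs of product
  have e0 : f.coeff 0 = g.coeff 0 := by
    rw [hg]; simp [coeff_mul]
  have e3 : f.coeff 3 = g.coeff 0 + g.coeff 3 := by
    rw [hg, add_mul, add_mul, coeff_add, coeff_add, one_mul, coeff_X_pow_mul', coeff_X_pow_mul']
    norm_num
  rw [hc3, hg3, add_zero, ← e0, hc0] at e3
  exact one_ne_zero e3.symm

lemma zeta9_ne : zeta 9 ≠ 0 := Complex.exp_ne_zero _

lemma zeta9_pow9 : zeta 9 ^ (9:ℕ) = 1 := zeta9_prim.pow_eq_one

lemma hper (m k : ℤ) : zeta 9 ^ (m + 9*k) = zeta 9 ^ m := by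
  rw [zpow_add₀ zeta9_ne, zpow_mul, show ((9:ℤ)) = ((9:ℕ):ℤ) by norm_num,
    zpow_natCast, zeta9_pow9, one_zpow, mul_one]

lemma h36 : (1:ℂ) + zeta 9 ^ (3:ℕ) + zeta 9 ^ (6:ℕ) = 0 := by
  have h1 : zeta 9 ^ (3:ℕ) ≠ 1 := zeta9_prim.pow_ne_one_of_pos_of_lt (by norm_num) (by norm_num)
  have h2 : (zeta 9 ^ (3:ℕ) - 1) * (1 + zeta 9 ^ (3:ℕ) + zeta 9 ^ (6:ℕ)) = 0 := by
    have := zeta9_pow9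
    linear_combination this
  rcases mul_eq_zero.mp h2 with h | h
  · exact absurd (by linear_combination h) h1
  · exact h

lemma hfac (p j : ℤ) :
    (∑ ν ∈ Finset.range 9, zeta 9 ^ (j * (ν : ℤ) - 4 * p * (ν : ℤ) ^ 3)) =
    (1 + zeta 9 ^ (3*j) + zeta 9 ^ (6*j)) *
      (1 + zeta 9 ^ (j - 4*p) + zeta 9 ^ (2*j - 32*p)) := by
  have hne := zeta9_ne
  rw [show (9:ℕ) = 8+1 by rfl, Finset.sum_range_succ, Finset.sum_range_succ,
    Finset.sum_range_succ, Finset.sum_range_succ, Finset.sum_range_succ,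
    Finset.sum_range_succ, Finset.sum_range_succ, Finset.sum_range_succ,
    Finset.sum_range_one]
  push_cast
  have e0 : zeta 9 ^ (j * 0 - 4*p*0) = 1 := by
    rw [show j*0 - 4*p*0 = 0 by ring, zpow_zero]
  have e3 : zeta 9 ^ (j * 3 - 4*p*27) = zeta 9 ^ (3*j) := by
    rw [show j*3 - 4*p*27 = 3*j + 9*(-12*p) by ring, hper]
  have e4 : zeta 9 ^ (j * 4 - 4*p*64) = zeta 9 ^ (3*j) * zeta 9 ^ (j - 4*p) := by
    rw [← zpow_add₀ hne, show j*4 - 4*p*64 = (3*j + (j - 4*p)) + 9*(-28*p) by ring, hper]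
  have e5 : zeta 9 ^ (j * 5 - 4*p*125) = zeta 9 ^ (3*j) * zeta 9 ^ (2*j - 32*p) := by
    rw [← zpow_add₀ hne, show j*5 - 4*p*125 = (3*j + (2*j - 32*p)) + 9*(-52*p) by ring, hper]
  have e6 : zeta 9 ^ (j * 6 - 4*p*216) = zeta 9 ^ (6*j) := by
    rw [show j*6 - 4*p*216 = 6*j + 9*(-96*p) by ring, hper]
  have e7 : zeta 9 ^ (j * 7 - 4*p*343) = zeta 9 ^ (6*j) * zeta 9 ^ (j - 4*p) := by
    rw [← zpow_add₀ hne, show j*7 - 4*p*343 = (6*j + (j - 4*p)) + 9*(-152*p) by ring, hper]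
  have e8 : zeta 9 ^ (j * 8 - 4*p*512) = zeta 9 ^ (6*j) * zeta 9 ^ (2*j - 32*p) := by
    rw [← zpow_add₀ hne, show j*8 - 4*p*512 = (6*j + (2*j - 32*p)) + 9*(-224*p) by ring, hper]
  have e1 : zeta 9 ^ (j * 1 - 4*p*1) = zeta 9 ^ (j - 4*p) := by
    rw [show j*1 - 4*p*1 = j - 4*p by ring]
  have e2 : zeta 9 ^ (j * 2 - 4*p*8) = zeta 9 ^ (2*j - 32*p) := by
    rw [show j*2 - 4*p*8 = 2*j - 32*p by ring]
  rw [e0, e1, e2, e3, e4, e5, e6, e7, e8]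
  ring

lemma zred (e : ℤ) : zeta 9 ^ e = zeta 9 ^ ((e % 9).toNat) := by
  have h9 : (0:ℤ) ≤ e % 9 := Int.emod_nonneg e (by norm_num)
  conv_lhs => rw [show e = (((e % 9).toNat : ℤ)) + 9 * (e / 9) by omega]
  rw [hper, zpow_natCast]

/-- For an integer p not divisible by 3, the even partial Kummer sum
for q = 9, namely Σ_{ν=0}^{8} ζ_9^{jν − 4pν³}, vanishes if and only if 3 ∤ j. -/
theorem points_of_constancy_q_nine (p : ℤ) (hp : ¬ (3 : ℤ) ∣ p) (j : ℤ) :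
    (∑ ν ∈ Finset.range 9, zeta 9 ^ (j * (ν : ℤ) - 4 * p * (ν : ℤ) ^ 3)) = 0 ↔
    ¬ (3 : ℤ) ∣ j := by
  rw [hfac]
  constructor
  · intro hS hj3
    obtain ⟨m, rfl⟩ := hj3
    have hA : (1:ℂ) + zeta 9 ^ (3*(3*m)) + zeta 9 ^ (6*(3*m)) = 3 := by
      rw [show 3*(3*m) = 0 + 9*m by ring, hper, show 6*(3*m) = 0 + 9*(2*m) by ring, hper,
        zpow_zero]
      norm_num
    rw [hA] at hS
    have hB : (1 + zeta 9 ^ (3*m - 4*p) + zeta 9 ^ (2*(3*m) - 32*p)) = 0 := by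
      rcases mul_eq_zero.mp hS with h | h
      · exact absurd h (by norm_num)
      · exact h
    rw [zred (3*m - 4*p), zred (2*(3*m) - 32*p)] at hB
    have hr' : (((3*m - 4*p) % 9).toNat : ℤ) = (3*m - 4*p) % 9 :=
      Int.toNat_of_nonneg (Int.emod_nonneg _ (by norm_num))
    have hs' : (((2*(3*m) - 32*p) % 9).toNat : ℤ) = (2*(3*m) - 32*p) % 9 :=
      Int.toNat_of_nonneg (Int.emod_nonneg _ (by norm_num))
    refine B_ne _ _ ?_ ?_ ?_ ?_ hB
    · omega
    · omega
    · intro hd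
      have : (3:ℤ) ∣ (((3*m - 4*p) % 9).toNat : ℤ) := Int.natCast_dvd_natCast.mpr hd
      omega
    · intro hd
      have : (3:ℤ) ∣ (((2*(3*m) - 32*p) % 9).toNat : ℤ) := Int.natCast_dvd_natCast.mpr hd
      omega
  · intro hj
    have hA : (1:ℂ) + zeta 9 ^ (3*j) + zeta 9 ^ (6*j) = 0 := by
      have hcase : j % 3 = 1 ∨ j % 3 = 2 := by omega
      have h3n : zeta 9 ^ ((3:ℕ):ℤ) = zeta 9 ^ (3:ℕ) := zpow_natCast _ 3
      have h6n : zeta 9 ^ ((6:ℕ):ℤ) = zeta 9 ^ (6:ℕ) := zpow_natCast _ 6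
      rcases hcase with h | h
      · rw [show 3*j = 3 + 9*(j/3) by omega, hper, show 6*j = 6 + 9*(2*(j/3)) by omega, hper,
          show (3:ℤ) = ((3:ℕ):ℤ) by norm_num, h3n, show (6:ℤ) = ((6:ℕ):ℤ) by norm_num, h6n]
        exact h36
      · rw [show 3*j = 6 + 9*(j/3) by omega, hper, show 6*j = 3 + 9*(2*(j/3)+1) by omega, hper,
          show (3:ℤ) = ((3:ℕ):ℤ) by norm_num, h3n, show (6:ℤ) = ((6:ℕ):ℤ) by norm_num, h6n]
        linear_combination h36
    rw [hA, zero_mul]
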